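/- (Proposition 4.7, magnetic Reynolds identity) Let L > 0, let v₀(t,x) = (L²e^{2Lt}/(2π)^{3/2})·(sin x₃, 0, 0) and Ξ₀(t,x) = (L²e^{2Lt}/(2π)³)·(sin x₃, cos x₃, 0), and define M_Ξ(t,x) = (2L³e^{2Lt}/(2π)³)·N(x₃), where N(x₃) is the 3×3 matrix whose rows are (0, 0, −cos x₃), (0, 0, sin x₃), and (cos x₃, −sin x₃, 0). Then M_Ξ(t,x) is skew-symmetric for every (t,x); moreover div(v₀ ⊗ Ξ₀ − Ξ₀ ⊗ v₀)(t,x) = 0 for all (t,x), and ∂_t Ξ₀ + div(v₀ ⊗ Ξ₀ − Ξ₀ ⊗ v₀) = div M_Ξ everywhere. -/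

import Mathlib

open scoped Matrix

/-- Outer product of two vectors in ℝ³: `(u ⊗ w)ᵢⱼ = uᵢ wⱼ`. -/
def outer (u w : Fin 3 → ℝ) : Matrix (Fin 3) (Fin 3) ℝ := fun i j => u i * w j

/-- Divergence of a matrix-valued field: `(div M)ᵢ = ∑ⱼ ∂ⱼ Mᵢⱼ`. -/
noncomputable def divMat (M : (Fin 3 → ℝ) → Matrix (Fin 3) (Fin 3) ℝ)
    (x : Fin 3 → ℝ) (i : Fin 3) : ℝ :=
  ∑ j, fderiv ℝ (fun y => M y i j) x (Pi.single j 1)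

/-- The initial velocity field `v₀(t,x) = (L²e^{2Lt}/(2π)^{3/2})·(sin x₃, 0, 0)`. -/
noncomputable def v0 (L t : ℝ) (x : Fin 3 → ℝ) : Fin 3 → ℝ :=
  ![L ^ 2 * Real.exp (2 * L * t) / (2 * Real.pi) ^ ((3 : ℝ) / 2) * Real.sin (x 2), 0, 0]

/-- The initial magnetic field `Ξ₀(t,x) = (L²e^{2Lt}/(2π)³)·(sin x₃, cos x₃, 0)`. -/
noncomputable def Xi0 (L t : ℝ) (x : Fin 3 → ℝ) : Fin 3 → ℝ :=
  ![L ^ 2 * Real.exp (2 * L * t) / (2 * Real.pi) ^ (3 : ℕ) * Real.sin (x 2),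
    L ^ 2 * Real.exp (2 * L * t) / (2 * Real.pi) ^ (3 : ℕ) * Real.cos (x 2), 0]

/-- The explicit magnetic Reynolds stress `M_Ξ(t,x) = (2L³e^{2Lt}/(2π)³)·N(x₃)`, where `N(x₃)`
has rows `(0, 0, −cos x₃)`, `(0, 0, sin x₃)`, `(cos x₃, −sin x₃, 0)`. -/
noncomputable def MXi (L t : ℝ) (x : Fin 3 → ℝ) : Matrix (Fin 3) (Fin 3) ℝ :=
  (2 * L ^ 3 * Real.exp (2 * L * t) / (2 * Real.pi) ^ (3 : ℕ)) •
    !![0, 0, -Real.cos (x 2); 0, 0, Real.sin (x 2); Real.cos (x 2), -Real.sin (x 2), 0]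

/-!
All fields depend on `x` only through `x₃`, so the divergence of such a field is the
`x₃`-derivative of its third column. The third column of `v₀ ⊗ Ξ₀ − Ξ₀ ⊗ v₀` vanishes since the
third components of `v₀` and `Ξ₀` do, while the third column of `M_Ξ` is
`2L · L²e^{2Lt}/(2π)³ · (−cos x₃, sin x₃, 0)`, whose `x₃`-derivative is `2L Ξ₀ = ∂ₜ Ξ₀`.
-/

theorem fderiv_comp_eval_apply_single {ι : Type*} [Fintype ι] [DecidableEq ι] (f : ℝ → ℝ)
    (k : ι) (x : ι → ℝ) (j : ι) :
    fderiv ℝ (fun y : ι → ℝ => f (y k)) x (Pi.single j 1) =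
      (Pi.single j 1 : ι → ℝ) k * deriv f (x k) := by
  by_cases hf : DifferentiableAt ℝ f (x k)
  · have hg : HasFDerivAt (fun y : ι → ℝ => f (y k)) (deriv f (x k) • .proj k) x :=
      hf.hasDerivAt.comp_hasFDerivAt x (hasFDerivAt_apply (𝕜 := ℝ) k x)
    simp [hg.fderiv, mul_comm]
  · -- `f` is recovered from `y ↦ f (y k)` by restricting to the line `s ↦ update x k s`
    have hg : ¬DifferentiableAt ℝ (fun y : ι → ℝ => f (y k)) x := fun hg => hf <| by
      rw [← Function.update_eq_self k x] at hg
      simpa [Function.comp_def] using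
        hg.comp (x k) (hasFDerivAt_update (𝕜 := ℝ) x (x k)).differentiableAt
    rw [fderiv_zero_of_not_differentiableAt hg, deriv_zero_of_not_differentiableAt hf]
    simp

theorem divMat_eq_deriv_of_depends_on_two (M : (Fin 3 → ℝ) → Matrix (Fin 3) (Fin 3) ℝ)
    (hM : ∀ y, M y = M (fun _ => y 2)) (x : Fin 3 → ℝ) (i : Fin 3) :
    divMat M x i = deriv (fun s => M (fun _ => s) i 2) (x 2) := by
  simp only [divMat]
  conv_lhs => enter [2, j]; rw [funext fun y => congrFun (congrFun (hM y) i) j,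
    fderiv_comp_eval_apply_single (fun s => M (fun _ => s) i j)]
  simp [Pi.single_apply]

theorem hasDerivAt_Xi0_time (L t : ℝ) (x : Fin 3 → ℝ) (i : Fin 3) :
    HasDerivAt (fun s => Xi0 L s x i) (2 * L * Xi0 L t x i) t := by
  have hexp : HasDerivAt (fun s => L ^ 2 * Real.exp (2 * L * s) / (2 * Real.pi) ^ 3)
      (2 * L * (L ^ 2 * Real.exp (2 * L * t) / (2 * Real.pi) ^ 3)) t :=
    ((((hasDerivAt_id t).const_mul (2 * L)).exp.const_mul (L ^ 2)).div_const
      ((2 * Real.pi) ^ 3)).congr_deriv (by simp only [id_eq, mul_one]; ring)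
  fin_cases i
  · simpa [Xi0, mul_assoc] using hexp.mul_const (Real.sin (x 2))
  · simpa [Xi0, mul_assoc] using hexp.mul_const (Real.cos (x 2))
  · simpa [Xi0] using hasDerivAt_const t (0 : ℝ)

theorem hasDerivAt_MXi_col_two (L t : ℝ) (x : Fin 3 → ℝ) (i : Fin 3) :
    HasDerivAt (fun s => MXi L t (fun _ => s) i 2) (2 * L * Xi0 L t x i) (x 2) := by
  fin_cases i
  · exact ((Real.hasDerivAt_cos (x 2)).neg.const_mul _).congr_deriv <| by
      simp only [Fin.isValue, neg_neg, Xi0, Fin.zero_eta, Matrix.cons_val_zero]; ring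
  · exact ((Real.hasDerivAt_sin (x 2)).const_mul _).congr_deriv <| by
      simp only [Fin.isValue, Xi0, Fin.mk_one, Matrix.cons_val_one, Matrix.cons_val_zero]; ring
  · simpa [MXi, Xi0] using hasDerivAt_const (x 2) (0 : ℝ)

theorem prop47_magnetic_reynolds_general (L : ℝ) :
    (∀ (t : ℝ) (x : Fin 3 → ℝ), (MXi L t x)ᵀ = -(MXi L t x)) ∧
    (∀ (t : ℝ) (x : Fin 3 → ℝ) (i : Fin 3),
      divMat (fun y => outer (v0 L t y) (Xi0 L t y) - outer (Xi0 L t y) (v0 L t y)) x i = 0) ∧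
    (∀ (t : ℝ) (x : Fin 3 → ℝ) (i : Fin 3),
      deriv (fun s => Xi0 L s x i) t +
        divMat (fun y => outer (v0 L t y) (Xi0 L t y) - outer (Xi0 L t y) (v0 L t y)) x i =
      divMat (fun y => MXi L t y) x i) := by
  have hdiv : ∀ (t : ℝ) (x : Fin 3 → ℝ) (i : Fin 3),
      divMat (fun y => outer (v0 L t y) (Xi0 L t y) - outer (Xi0 L t y) (v0 L t y)) x i = 0 := by
    intro t x i
    rw [divMat_eq_deriv_of_depends_on_two _ (fun _ => rfl)]
    fin_cases i <;> simp [outer, v0, Xi0]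
  refine ⟨fun t x => ?_, hdiv, fun t x i => ?_⟩
  · ext i j
    fin_cases i <;> fin_cases j <;> simp [MXi]
  · rw [hdiv, add_zero, divMat_eq_deriv_of_depends_on_two _ (fun _ => rfl),
      (hasDerivAt_Xi0_time L t x i).deriv, (hasDerivAt_MXi_col_two L t x i).deriv]

/-- **Proposition 4.7 (magnetic Reynolds identity).** `M_Ξ` is skew-symmetric,
`div(v₀ ⊗ Ξ₀ − Ξ₀ ⊗ v₀) = 0`, and `∂_t Ξ₀ + div(v₀ ⊗ Ξ₀ − Ξ₀ ⊗ v₀) = div M_Ξ` everywhere. -/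
theorem prop47_magnetic_reynolds (L : ℝ) (hL : 0 < L) :
    (∀ (t : ℝ) (x : Fin 3 → ℝ), (MXi L t x)ᵀ = -(MXi L t x)) ∧
    (∀ (t : ℝ) (x : Fin 3 → ℝ) (i : Fin 3),
      divMat (fun y => outer (v0 L t y) (Xi0 L t y) - outer (Xi0 L t y) (v0 L t y)) x i = 0) ∧
    (∀ (t : ℝ) (x : Fin 3 → ℝ) (i : Fin 3),
      deriv (fun s => Xi0 L s x i) t +
        divMat (fun y => outer (v0 L t y) (Xi0 L t y) - outer (Xi0 L t y) (v0 L t y)) x i =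
      divMat (fun y => MXi L t y) x i) :=
  prop47_magnetic_reynolds_general L
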